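/- (Stability of the cross-covariance in the ensemble.) Let X^(1),…,X^(M) and Y^(1),…,Y^(M) be two ensembles in ℝ^d with M ≥ 2 and let g : ℝ^d → ℝ^p be Lipschitz with constant L. Write E_X := [X^(i) − x̄]_{i=1}^M, 𝒢_X := [g(X^(i)) − ḡ_X]_{i=1}^M, tr(P_X) := (1/(M−1))Σ_i ‖X^(i) − x̄‖², and analogously E_Y, 𝒢_Y, tr(P_Y) for the Y-ensemble. Then (1/(M−1)) ‖E_X 𝒢_Xᵀ − E_Y 𝒢_Yᵀ‖ ≤ 2L (tr(P_X)^{1/2} + tr(P_Y)^{1/2}) · ((1/(M−1)) Σ_{i=1}^M ‖X^(i) − Y^(i)‖²)^{1/2}. -/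

import Mathlib

open Matrix MeasureTheory
open scoped Matrix.Norms.L2Operator NNReal RealInnerProductSpace

/-!
Split `E_X 𝒢_Xᵀ - E_Y 𝒢_Yᵀ = E_X (𝒢_X - 𝒢_Y)ᵀ + (E_X - E_Y) 𝒢_Yᵀ` and bound the operator norm of
each factor by the root of the sum of the squared norms of its columns. The columns of `E_X - E_Y`
and `𝒢_X - 𝒢_Y` are the deviations of the ensembles `X - Y` and `g ∘ X - g ∘ Y`, and since the mean
minimises the sum of squared distances, these are controlled by `‖X⁽ⁱ⁾ - Y⁽ⁱ⁾‖` and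
`L ‖X⁽ⁱ⁾ - Y⁽ⁱ⁾‖`; likewise the columns of `𝒢_Y` are controlled by `L ‖Y⁽ⁱ⁾ - ȳ‖`, comparing with
the centre `g(ȳ)`.
-/

/-- The ensemble mean `x̄ = (1/M) ∑ᵢ X⁽ⁱ⁾`. -/
noncomputable def ensMean {d M : ℕ} (X : Fin M → EuclideanSpace ℝ (Fin d)) :
    EuclideanSpace ℝ (Fin d) :=
  (M : ℝ)⁻¹ • ∑ i, X i

/-- The matrix of ensemble deviations, with columns `X⁽ⁱ⁾ − x̄`. -/
noncomputable def devMat {d M : ℕ} (X : Fin M → EuclideanSpace ℝ (Fin d)) :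
    Matrix (Fin d) (Fin M) ℝ :=
  Matrix.of fun j i => (X i - ensMean X) j

/-- The trace of the empirical covariance matrix,
`tr(P) = (1/(M−1)) ∑ᵢ ‖X⁽ⁱ⁾ − x̄‖²`. -/
noncomputable def trP {d M : ℕ} (X : Fin M → EuclideanSpace ℝ (Fin d)) : ℝ :=
  ((M : ℝ) - 1)⁻¹ * ∑ i, ‖X i - ensMean X‖ ^ 2

namespace Matrix

variable {𝕜 m n ι : Type*} [RCLike 𝕜] [Fintype m] [Fintype n] [Fintype ι] [DecidableEq ι]

theorem l2_opNorm_of_cols_le (w : ι → EuclideanSpace 𝕜 m) :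
    ‖(Matrix.of fun j i => w i j : Matrix m ι 𝕜)‖ ≤ √(∑ i, ‖w i‖ ^ 2) := by
  rw [l2_opNorm_def]
  refine ContinuousLinearMap.opNorm_le_bound _ (Real.sqrt_nonneg _) fun x => ?_
  have hcols : (toEuclideanLin.trans LinearMap.toContinuousLinearMap
      (Matrix.of fun j i => w i j : Matrix m ι 𝕜)) x = ∑ i, x i • w i := by
    ext j
    simp [toLpLin_apply, mulVec, dotProduct, mul_comm]
  calc _ = ‖∑ i, x i • w i‖ := by rw [hcols]
    _ ≤ ∑ i, ‖x i‖ * ‖w i‖ := (norm_sum_le _ _).trans_eq (by simp only [norm_smul])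
    _ ≤ √(∑ i, ‖x i‖ ^ 2) * √(∑ i, ‖w i‖ ^ 2) := Real.sum_mul_le_sqrt_mul_sqrt _ _ _
    _ = √(∑ i, ‖w i‖ ^ 2) * ‖x‖ := by rw [EuclideanSpace.norm_eq, mul_comm]

theorem l2_opNorm_transpose [DecidableEq m] [DecidableEq n] (A : Matrix m n ℝ) : ‖Aᵀ‖ = ‖A‖ :=
  l2_opNorm_conjTranspose A

theorem l2_opNorm_mul_transpose_sub_le [DecidableEq m] [DecidableEq n]
    (A C : Matrix m ι ℝ) (B D : Matrix n ι ℝ) :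
    ‖A * Bᵀ - C * Dᵀ‖ ≤ ‖A‖ * ‖B - D‖ + ‖A - C‖ * ‖D‖ := by
  have hsplit : A * Bᵀ - C * Dᵀ = A * (B - D)ᵀ + (A - C) * Dᵀ := by
    rw [transpose_sub, Matrix.mul_sub, Matrix.sub_mul]
    abel
  calc ‖A * Bᵀ - C * Dᵀ‖ ≤ ‖A * (B - D)ᵀ‖ + ‖(A - C) * Dᵀ‖ := hsplit ▸ norm_add_le _ _
    _ ≤ ‖A‖ * ‖B - D‖ + ‖A - C‖ * ‖D‖ := by
      grw [l2_opNorm_mul, l2_opNorm_mul, l2_opNorm_transpose, l2_opNorm_transpose]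

end Matrix

theorem LipschitzWith.sum_norm_sub_sq_le {ι E F : Type*} [SeminormedAddCommGroup E]
    [SeminormedAddCommGroup F] {L : ℝ≥0} {g : E → F} (hg : LipschitzWith L g) (s : Finset ι)
    (u v : ι → E) :
    ∑ i ∈ s, ‖g (u i) - g (v i)‖ ^ 2 ≤ (L : ℝ) ^ 2 * ∑ i ∈ s, ‖u i - v i‖ ^ 2 := by
  rw [Finset.mul_sum]
  refine Finset.sum_le_sum fun i _ => ?_
  rw [← mul_pow]
  exact pow_le_pow_left₀ (norm_nonneg _) (hg.norm_sub_le _ _) 2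

theorem Real.sqrt_eq_sqrt_mul_sqrt_inv_mul {a : ℝ} (ha : 0 < a) (b : ℝ) :
    √b = √a * √(a⁻¹ * b) := by
  rw [← Real.sqrt_mul ha.le, mul_inv_cancel_left₀ ha.ne']

section Ensemble

variable {d p M : ℕ}

theorem sum_sub_ensMean (X : Fin M → EuclideanSpace ℝ (Fin d)) :
    ∑ i, (X i - ensMean X) = 0 := by
  rcases Nat.eq_zero_or_pos M with rfl | hM
  · simp
  rw [Finset.sum_sub_distrib, Finset.sum_const, Finset.card_univ, Fintype.card_fin,
    ensMean, ← Nat.cast_smul_eq_nsmul ℝ, smul_smul, mul_inv_cancel₀ (by positivity), one_smul,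
    sub_self]

theorem sum_norm_sub_ensMean_sq_le (X : Fin M → EuclideanSpace ℝ (Fin d))
    (c : EuclideanSpace ℝ (Fin d)) :
    ∑ i, ‖X i - ensMean X‖ ^ 2 ≤ ∑ i, ‖X i - c‖ ^ 2 := by
  have hpyth : ∑ i, ‖X i - c‖ ^ 2 = ∑ i, ‖X i - ensMean X‖ ^ 2 + M * ‖ensMean X - c‖ ^ 2 := by
    simp_rw [← sub_add_sub_cancel (X _) (ensMean X) c, norm_add_sq_real, Finset.sum_add_distrib]
    rw [← Finset.mul_sum, ← sum_inner, sum_sub_ensMean, inner_zero_left]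
    simp
  rw [hpyth]
  exact le_add_of_nonneg_right (by positivity)

theorem ensMean_sub (X Y : Fin M → EuclideanSpace ℝ (Fin d)) :
    ensMean (X - Y) = ensMean X - ensMean Y := by
  simp only [ensMean, Pi.sub_apply, Finset.sum_sub_distrib, smul_sub]

theorem devMat_sub (X Y : Fin M → EuclideanSpace ℝ (Fin d)) :
    devMat X - devMat Y = devMat (X - Y) := by
  ext j i
  simp only [devMat, ensMean_sub, Matrix.sub_apply, of_apply, Pi.sub_apply, PiLp.sub_apply]
  ring

theorem norm_devMat_le (X : Fin M → EuclideanSpace ℝ (Fin d)) :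
    ‖devMat X‖ ≤ √(∑ i, ‖X i - ensMean X‖ ^ 2) :=
  l2_opNorm_of_cols_le _

theorem norm_devMat_sub_le (X Y : Fin M → EuclideanSpace ℝ (Fin d)) :
    ‖devMat X - devMat Y‖ ≤ √(∑ i, ‖X i - Y i‖ ^ 2) := by
  rw [devMat_sub]
  refine (norm_devMat_le _).trans (Real.sqrt_le_sqrt ?_)
  simpa using sum_norm_sub_ensMean_sq_le (X - Y) 0

variable {L : ℝ≥0} {g : EuclideanSpace ℝ (Fin d) → EuclideanSpace ℝ (Fin p)}

theorem norm_devMat_comp_le (hg : LipschitzWith L g) (X : Fin M → EuclideanSpace ℝ (Fin d)) :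
    ‖devMat (g ∘ X)‖ ≤ L * √(∑ i, ‖X i - ensMean X‖ ^ 2) := by
  refine (norm_devMat_le _).trans ?_
  rw [← Real.sqrt_sq L.coe_nonneg, ← Real.sqrt_mul (by positivity)]
  refine Real.sqrt_le_sqrt ((sum_norm_sub_ensMean_sq_le _ (g (ensMean X))).trans ?_)
  exact hg.sum_norm_sub_sq_le _ X fun _ => ensMean X

theorem norm_devMat_comp_sub_le (hg : LipschitzWith L g)
    (X Y : Fin M → EuclideanSpace ℝ (Fin d)) :
    ‖devMat (g ∘ X) - devMat (g ∘ Y)‖ ≤ L * √(∑ i, ‖X i - Y i‖ ^ 2) := by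
  refine (norm_devMat_sub_le _ _).trans ?_
  rw [← Real.sqrt_sq L.coe_nonneg, ← Real.sqrt_mul (by positivity)]
  exact Real.sqrt_le_sqrt (hg.sum_norm_sub_sq_le _ X Y)

theorem norm_crossCov_sub_le (hg : LipschitzWith L g) (X Y : Fin M → EuclideanSpace ℝ (Fin d)) :
    ‖devMat X * (devMat (g ∘ X))ᵀ - devMat Y * (devMat (g ∘ Y))ᵀ‖ ≤
      L * (√(∑ i, ‖X i - ensMean X‖ ^ 2) + √(∑ i, ‖Y i - ensMean Y‖ ^ 2)) *
        √(∑ i, ‖X i - Y i‖ ^ 2) := by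
  calc _ ≤ ‖devMat X‖ * ‖devMat (g ∘ X) - devMat (g ∘ Y)‖
          + ‖devMat X - devMat Y‖ * ‖devMat (g ∘ Y)‖ :=
        l2_opNorm_mul_transpose_sub_le _ _ _ _
    _ ≤ √(∑ i, ‖X i - ensMean X‖ ^ 2) * (L * √(∑ i, ‖X i - Y i‖ ^ 2))
          + √(∑ i, ‖X i - Y i‖ ^ 2) * (L * √(∑ i, ‖Y i - ensMean Y‖ ^ 2)) := by
        grw [norm_devMat_le X, norm_devMat_comp_sub_le hg X Y, norm_devMat_sub_le X Y,
          norm_devMat_comp_le hg Y]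
    _ = _ := by ring

end Ensemble

/-- stability of the cross-covariance in the ensemble:
`(1/(M−1)) ‖E_X 𝒢_Xᵀ − E_Y 𝒢_Yᵀ‖ ≤ 2L (tr(P_X)^{1/2} + tr(P_Y)^{1/2}) ·
((1/(M−1)) ∑ᵢ ‖X⁽ⁱ⁾ − Y⁽ⁱ⁾‖²)^{1/2}`. -/
theorem cross_covariance_stability {d p M : ℕ} (hM : 2 ≤ M) (L : ℝ≥0)
    (g : EuclideanSpace ℝ (Fin d) → EuclideanSpace ℝ (Fin p)) (hg : LipschitzWith L g)
    (X Y : Fin M → EuclideanSpace ℝ (Fin d)) :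
    ((M : ℝ) - 1)⁻¹ * ‖devMat X * (devMat (g ∘ X))ᵀ - devMat Y * (devMat (g ∘ Y))ᵀ‖ ≤
      2 * (L : ℝ) * (Real.sqrt (trP X) + Real.sqrt (trP Y)) *
        Real.sqrt (((M : ℝ) - 1)⁻¹ * ∑ i, ‖X i - Y i‖ ^ 2) := by
  have hM1 : (0 : ℝ) < M - 1 := sub_pos.mpr (Nat.one_lt_cast.mpr hM)
  have hrescale (S : ℝ) := Real.sqrt_eq_sqrt_mul_sqrt_inv_mul hM1 S
  have hbound := norm_crossCov_sub_le hg X Y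
  rw [hrescale (∑ i, ‖X i - ensMean X‖ ^ 2), hrescale (∑ i, ‖Y i - ensMean Y‖ ^ 2),
    hrescale (∑ i, ‖X i - Y i‖ ^ 2)] at hbound
  calc _ ≤ ((M : ℝ) - 1)⁻¹ * (L * (√(M - 1 : ℝ) * √(trP X) + √(M - 1 : ℝ) * √(trP Y)) *
          (√(M - 1 : ℝ) * √(((M : ℝ) - 1)⁻¹ * ∑ i, ‖X i - Y i‖ ^ 2))) :=
        mul_le_mul_of_nonneg_left hbound (inv_nonneg.mpr hM1.le)
    _ = L * (√(trP X) + √(trP Y)) * √(((M : ℝ) - 1)⁻¹ * ∑ i, ‖X i - Y i‖ ^ 2) := by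
      field_simp
      rw [Real.sq_sqrt hM1.le]
      ring
    _ ≤ _ := by
      gcongr
      linarith
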